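/- The algebra 𝔠₇₆ on ℂ⁵ with nonzero basis products e₁e₁ = e₂, e₁e₂ = e₄, e₁e₄ = e₅, e₂e₂ = −2e₅, e₃e₃ = e₄ + 3e₅ is a nilpotent commutative algebra (A⁶ = 0) that satisfies the almost-Jordan identity 2·(((y·x)·x)·x) + y·((x·x)·x) = 3·((y·(x·x))·x) for all x, y, but does not satisfy the Jordan identity: there exist x, y with ((x·x)·y)·x ≠ (x·x)·(y·x). -/

import Mathlib

/-!
Commutativity and the almost-Jordan identity are polynomial identities in the coordinates of
`x` and `y`, read off from the explicit product formula. For nilpotency, give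
`e₁, …, e₅` the weights `1, 2, 1, 3, 4`: every nonzero structure constant `eᵢeⱼ → eₖ` has
`wt k ≥ wt i + wt j`, so a product of `n` elements has no component of weight `< n`; as all
weights are `≤ 4 < 6`, products of six elements vanish. The Jordan identity fails at
`x = e₁ + e₃`, `y = e₁`.
-/

/-- `IsProdOf μ n z` says that `z` is a product of `n` elements under the
multiplication `μ`, with some arrangement of parentheses. -/
inductive IsProdOf {V : Type*} (μ : V → V → V) : ℕ → V → Prop
  | base (x : V) : IsProdOf μ 1 x
  | mul {m n : ℕ} {a b : V} :
      IsProdOf μ m a → IsProdOf μ n b → IsProdOf μ (m + n) (μ a b)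

/-- Structure constants of the algebra 𝔠₇₆ (e₁e₁ = e₂, e₁e₂ = e₄, e₁e₄ = e₅, e₂e₂ = −2e₅, e₃e₃ = e₄ + 3e₅) on ℂ⁵ (basis `e₁, …, e₅` indexed by `Fin 5`),
extended symmetrically; unlisted products of basis vectors are zero. -/
noncomputable def tbl76 : Fin 5 → Fin 5 → Fin 5 → ℂ :=
  ![![![0,1,0,0,0], ![0,0,0,1,0], 0, ![0,0,0,0,1], 0],
    ![![0,0,0,1,0], ![0,0,0,0,-2], 0, 0, 0],
    ![0, 0, ![0,0,0,1,3], 0, 0],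
    ![![0,0,0,0,1], 0, 0, 0, 0],
    0]

/-- The bilinear multiplication of the algebra on ℂ⁵. -/
noncomputable def mul76 (x y : Fin 5 → ℂ) : Fin 5 → ℂ :=
  fun k => ∑ i, ∑ j, x i * y j * tbl76 i j k

section StructureConstants

variable {ι R : Type*} [Fintype ι] [CommSemiring R]

def mulOfTable (T : ι → ι → ι → R) (x y : ι → R) : ι → R :=
  fun k => ∑ i, ∑ j, x i * y j * T i j k

variable {T : ι → ι → ι → R} {w : ι → ℕ}

theorem IsProdOf.mulOfTable_apply_eq_zero (hw : ∀ k, 1 ≤ w k)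
    (hT : ∀ i j k, w k < w i + w j → T i j k = 0) {n : ℕ} {z : ι → R}
    (hz : IsProdOf (mulOfTable T) n z) {k : ι} (hk : w k < n) : z k = 0 := by
  induction hz generalizing k with
  | base x => exact absurd (hw k) (by omega)
  | @mul m n a b _ _ iha ihb =>
    refine Finset.sum_eq_zero fun i _ => Finset.sum_eq_zero fun j _ => ?_
    by_cases hi : w i < m
    · simp [iha hi]
    by_cases hj : w j < n
    · simp [ihb hj]
    simp [hT i j k (by omega)]

theorem IsProdOf.mulOfTable_eq_zero (hw : ∀ k, 1 ≤ w k)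
    (hT : ∀ i j k, w k < w i + w j → T i j k = 0) {n : ℕ} (hn : ∀ k, w k < n) {z : ι → R}
    (hz : IsProdOf (mulOfTable T) n z) : z = 0 :=
  funext fun _ => hz.mulOfTable_apply_eq_zero hw hT (hn _)

end StructureConstants

theorem mul76_eq_mulOfTable : mul76 = mulOfTable tbl76 := rfl

theorem mul76_eq (x y : Fin 5 → ℂ) :
    mul76 x y = ![0, x 0 * y 0, 0, x 0 * y 1 + x 1 * y 0 + x 2 * y 2,
      x 0 * y 3 + x 3 * y 0 - 2 * (x 1 * y 1) + 3 * (x 2 * y 2)] := by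
  ext k
  fin_cases k <;> simp [mul76, tbl76, Fin.sum_univ_five]; ring

theorem mul76_comm (x y : Fin 5 → ℂ) : mul76 x y = mul76 y x := by
  ext k
  fin_cases k <;> simp [mul76_eq] <;> ring

def weight76 : Fin 5 → ℕ := ![1, 2, 1, 3, 4]

theorem tbl76_eq_zero_of_lt_weight {i j k : Fin 5}
    (h : weight76 k < weight76 i + weight76 j) : tbl76 i j k = 0 := by
  fin_cases i <;> fin_cases j <;> fin_cases k <;> simp_all [tbl76, weight76]

theorem isProdOf_mul76_six_eq_zero {z : Fin 5 → ℂ} (hz : IsProdOf mul76 6 z) : z = 0 := by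
  rw [mul76_eq_mulOfTable] at hz
  exact hz.mulOfTable_eq_zero (w := weight76) (by decide)
    (fun _ _ _ => tbl76_eq_zero_of_lt_weight) (by decide)

theorem mul76_almostJordan (x y : Fin 5 → ℂ) :
    (2 : ℂ) • mul76 (mul76 (mul76 y x) x) x + mul76 y (mul76 (mul76 x x) x) =
      (3 : ℂ) • mul76 (mul76 y (mul76 x x)) x := by
  ext k
  fin_cases k <;> simp [mul76_eq]; ring

theorem mul76_not_jordan :
    mul76 (mul76 (mul76 ![1, 0, 1, 0, 0] ![1, 0, 1, 0, 0]) ![1, 0, 0, 0, 0]) ![1, 0, 1, 0, 0] ≠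
      mul76 (mul76 ![1, 0, 1, 0, 0] ![1, 0, 1, 0, 0]) (mul76 ![1, 0, 0, 0, 0] ![1, 0, 1, 0, 0]) := by
  have lhs : mul76 (mul76 (mul76 ![1, 0, 1, 0, 0] ![1, 0, 1, 0, 0]) ![1, 0, 0, 0, 0])
      ![1, 0, 1, 0, 0] = ![0, 0, 0, 0, 1] := by simp [mul76_eq]
  have rhs : mul76 (mul76 ![1, 0, 1, 0, 0] ![1, 0, 1, 0, 0]) (mul76 ![1, 0, 0, 0, 0]
      ![1, 0, 1, 0, 0]) = ![0, 0, 0, 0, -2] := by simp [mul76_eq]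
  rw [lhs, rhs]
  intro h
  norm_num at h

/-- The algebra is nilpotent (A⁶ = 0), commutative, satisfies the almost-Jordan identity, but does not satisfy the Jordan identity. -/
theorem c76_properties :
    (∀ x y : Fin 5 → ℂ, mul76 x y = mul76 y x) ∧
    (∀ z : Fin 5 → ℂ, IsProdOf (mul76) 6 z → z = 0) ∧
    (∀ x y : Fin 5 → ℂ,
        (2 : ℂ) • mul76 (mul76 (mul76 y x) x) x + mul76 y (mul76 (mul76 x x) x) =
          (3 : ℂ) • mul76 (mul76 y (mul76 x x)) x) ∧
    (∃ x y : Fin 5 → ℂ,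
        mul76 (mul76 (mul76 x x) y) x ≠ mul76 (mul76 x x) (mul76 y x)) :=
  ⟨mul76_comm, fun _ => isProdOf_mul76_six_eq_zero, mul76_almostJordan, _, _, mul76_not_jordan⟩
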